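/- The bilinear bracket on Iuₙ is alternating ([u,u]=0 for all u) and satisfies the Jacobi identity; consequently Iuₙ, with this bracket, is a Lie algebra over K. -/

import Mathlib

/-- Index set for the basis of `Iuₙ`: the off-diagonal pairs indexing the `x_{ij}` (`i ≠ j`),
then the `a_i`'s, then the `b_i`'s. -/
abbrev IuIdx (n : ℕ) : Type := { p : Fin n × Fin n // p.1 ≠ p.2 } ⊕ (Fin n ⊕ Fin n)

/-- `Iuₙ`: the free `K`-vector space on the basis `{x_{ij} : i ≠ j} ∪ {a_i} ∪ {b_i}`. -/
abbrev Iu (n : ℕ) (K : Type*) [Field K] : Type _ := IuIdx n →₀ K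

variable (n : ℕ) (K : Type*) [Field K]

/-- The basis element `x_{ij}` (`i ≠ j`). -/
noncomputable def xE (i j : Fin n) (h : i ≠ j) : Iu n K :=
  Finsupp.single (Sum.inl ⟨(i, j), h⟩) 1

/-- The basis element `a_i`. -/
noncomputable def aE (i : Fin n) : Iu n K := Finsupp.single (Sum.inr (Sum.inl i)) 1

/-- The basis element `b_i`. -/
noncomputable def bE (i : Fin n) : Iu n K := Finsupp.single (Sum.inr (Sum.inr i)) 1

/-- `x_{ij}` as a total function (junk value `0` when `i = j`). -/
noncomputable def xe (i j : Fin n) : Iu n K := if h : i ≠ j then xE n K i j h else 0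

/-- The length `λ(i,j)`: equals `j - i` if `i < j`, and `n - (i - j)` if `i > j`. -/
def lam (n : ℕ) (i j : Fin n) : ℕ := (j - i : Fin n).val

/-- The bracket of `Iuₙ` on basis elements:
`[x_{ij}, x_{kl}] = δ_{jk} x_{il} - δ_{li} x_{kj}` if `λ(i,j) + λ(k,l) < n` and `0` otherwise
(unless both `j = k` and `l = i`); `[x_{ij}, x_{ji}] = ½(b_i - b_j)`;
`[a_i, x_{jk}] = (δ_{ij} - δ_{ik}) x_{jk}`; `[b_i, x_{jk}] = 0`;
`[a_i, a_j] = [b_i, b_j] = [a_i, b_j] = 0`; extended antisymmetrically. -/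
noncomputable def bb : IuIdx n → IuIdx n → Iu n K
  | Sum.inl ⟨(i, j), _⟩, Sum.inl ⟨(k, l), _⟩ =>
      if k = j ∧ l = i then ((2 : K)⁻¹) • (bE n K i - bE n K j)
      else if lam n i j + lam n k l < n then
        (if j = k then xe n K i l else 0) - (if l = i then xe n K k j else 0)
      else 0
  | Sum.inr (Sum.inl i), Sum.inl ⟨(j, k), _⟩ =>
      (((if i = j then 1 else 0) : K) - ((if i = k then 1 else 0) : K)) • xe n K j k
  | Sum.inl ⟨(j, k), _⟩, Sum.inr (Sum.inl i) =>
      -((((if i = j then 1 else 0) : K) - ((if i = k then 1 else 0) : K)) • xe n K j k)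
  | _, _ => 0

/-- The bilinear bracket of `Iuₙ`, extended bilinearly from its values on basis elements. -/
noncomputable def br : Iu n K →ₗ[K] Iu n K →ₗ[K] Iu n K :=
  Finsupp.lift (Iu n K →ₗ[K] Iu n K) K (IuIdx n) fun s =>
    Finsupp.lift (Iu n K) K (IuIdx n) fun t => bb n K s t

/-! The assignment `x_{ij} ↦ t^{λ(i,j)} E_{ij}`, `a_i ↦ E_{ii}`, `b_i ↦ 2 t^n E_{ii}` extends to a
`K`-linear map from `Iuₙ` to `n × n` matrices over `K[t]/(t^(n+1))` that carries the bracket to the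
commutator. Indeed `λ` is additive modulo `n` along `i → j → l`, so for `i ≠ l` the product
`t^{λ(i,j)} t^{λ(j,l)}` is `t^{λ(i,l)}` when `λ(i,j) + λ(j,l) < n` and vanishes otherwise (the sum
is never `n`), while `λ(i,j) + λ(j,i) = n` turns `[x_{ij}, x_{ji}]` into `t^n (E_{ii} - E_{jj})`,
which is where the factor `2` in the image of `b_i` comes from. Distinct basis vectors occupy
distinct (entry, power of `t`) slots, so the map is injective, and the Lie ring axioms of the
commutator pull back to `Iuₙ`. -/

section LieAlgebraStructure

open Polynomial Matrix

attribute [local instance] LieRing.ofAssociativeRing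

abbrev Function.Injective.lieRing {M L : Type*} [AddCommGroup M] [LieRing L] {f : M →+ L}
    (hf : Function.Injective f) (b : M → M → M) (hb : ∀ x y, f (b x y) = ⁅f x, f y⁆) :
    LieRing M where
  __ := ‹AddCommGroup M›
  bracket := b
  add_lie x y z := hf <| by simp only [hb, map_add, add_lie]
  lie_add x y z := hf <| by simp only [hb, map_add, lie_add]
  lie_self x := hf <| by simp only [hb, lie_self, map_zero]
  leibniz_lie x y z := hf <| by rw [hb, hb, map_add, hb, hb, hb, hb, leibniz_lie]

theorem lie_lie_add_lie_lie_add_lie_lie {L : Type*} [LieRing L] (x y z : L) :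
    ⁅⁅x, y⁆, z⁆ + ⁅⁅y, z⁆, x⁆ + ⁅⁅z, x⁆, y⁆ = 0 := by
  calc ⁅⁅x, y⁆, z⁆ + ⁅⁅y, z⁆, x⁆ + ⁅⁅z, x⁆, y⁆
      = -(⁅x, ⁅y, z⁆⁆ + ⁅y, ⁅z, x⁆⁆ + ⁅z, ⁅x, y⁆⁆) := by
        rw [← lie_skew ⁅x, y⁆ z, ← lie_skew ⁅y, z⁆ x, ← lie_skew ⁅z, x⁆ y]
        abel
    _ = 0 := by rw [lie_jacobi, neg_zero]

section Lam

variable {n}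

theorem lam_lt (i j : Fin n) : lam n i j < n := (j - i).isLt

theorem lam_eq_zero_iff {i j : Fin n} : lam n i j = 0 ↔ i = j := by
  have : NeZero n := ⟨i.pos.ne'⟩
  rw [lam, Fin.val_eq_zero_iff, sub_eq_zero, eq_comm]

theorem lam_pos {i j : Fin n} (hij : i ≠ j) : 0 < lam n i j :=
  Nat.pos_of_ne_zero (mt lam_eq_zero_iff.mp hij)

theorem lam_add_lam_mod (i j k : Fin n) : (lam n i j + lam n j k) % n = lam n i k := by
  have : NeZero n := ⟨i.pos.ne'⟩
  rw [lam, lam, lam, add_comm, ← Fin.val_add, sub_add_sub_cancel]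

theorem lam_add_lam_of_lt {i j k : Fin n} (h : lam n i j + lam n j k < n) :
    lam n i j + lam n j k = lam n i k := by
  have := lam_add_lam_mod i j k
  rwa [Nat.mod_eq_of_lt h] at this

theorem lam_add_lam_ne {i j k : Fin n} (hik : i ≠ k) : lam n i j + lam n j k ≠ n := by
  intro h
  have := lam_add_lam_mod i j k
  rw [h, Nat.mod_self, eq_comm, lam_eq_zero_iff] at this
  exact hik this

theorem lam_add_lam_swap {i j : Fin n} (hij : i ≠ j) : lam n i j + lam n j i = n := by
  have hsum := lam_add_lam_mod i j i
  rw [lam_eq_zero_iff.mpr rfl] at hsum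
  obtain ⟨q, hq⟩ := Nat.dvd_of_mod_eq_zero hsum
  have hij' := lam_pos hij
  have hlt : lam n i j + lam n j i < 2 * n := by linarith [lam_lt i j, lam_lt j i]
  rcases q with _ | _ | q
  · omega
  · omega
  · nlinarith

end Lam

section Truncated

abbrev TruncPoly : Type _ := AdjoinRoot ((X : K[X]) ^ (n + 1))

noncomputable def truncT : TruncPoly n K := AdjoinRoot.root _

noncomputable def truncCoeff (k : ℕ) : TruncPoly n K →ₗ[K] K :=
  lcoeff K k ∘ₗ AdjoinRoot.modByMonicHom (monic_X_pow (n + 1))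

variable {n K}

theorem truncT_pow (d : ℕ) : truncT n K ^ d = AdjoinRoot.mk _ ((X : K[X]) ^ d) := by
  rw [map_pow, AdjoinRoot.mk_X, truncT]

theorem truncT_pow_eq_zero {d : ℕ} (hd : n < d) : truncT n K ^ d = 0 := by
  rw [truncT_pow, AdjoinRoot.mk_eq_zero]
  exact pow_dvd_pow _ hd

theorem truncCoeff_truncT_pow (k : ℕ) {d : ℕ} (hd : d ≤ n) :
    truncCoeff n K k (truncT n K ^ d) = if k = d then 1 else 0 := by
  have hmod : ((X : K[X]) ^ d) %ₘ (X ^ (n + 1)) = X ^ d := by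
    rw [modByMonic_eq_self_iff (monic_X_pow _), degree_X_pow, degree_X_pow]
    exact_mod_cast Nat.lt_succ_of_le hd
  rw [truncT_pow, truncCoeff, LinearMap.comp_apply, AdjoinRoot.modByMonicHom_mk, hmod,
    lcoeff_apply, coeff_X_pow]

theorem truncT_pow_lam_mul {i l : Fin n} (j : Fin n) (hil : i ≠ l) :
    truncT n K ^ lam n i j * truncT n K ^ lam n j l =
      if lam n i j + lam n j l < n then truncT n K ^ lam n i l else 0 := by
  rw [← pow_add]
  split_ifs with h
  · rw [lam_add_lam_of_lt h]
  · exact truncT_pow_eq_zero (lt_of_le_of_ne (not_lt.mp h) (lam_add_lam_ne hil).symm)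

end Truncated

section Embedding

def basisPos : IuIdx n → Fin n × Fin n
  | Sum.inl p => p.1
  | Sum.inr (Sum.inl i) => (i, i)
  | Sum.inr (Sum.inr i) => (i, i)

def basisDeg : IuIdx n → ℕ
  | Sum.inl ⟨(i, j), _⟩ => lam n i j
  | Sum.inr (Sum.inl _) => 0
  | Sum.inr (Sum.inr _) => n

def basisScale : IuIdx n → K
  | Sum.inr (Sum.inr _) => 2
  | _ => 1

noncomputable def basisMatrix (s : IuIdx n) : Matrix (Fin n) (Fin n) (TruncPoly n K) :=
  single (basisPos n s).1 (basisPos n s).2 (basisScale n K s • truncT n K ^ basisDeg n s)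

noncomputable def embed : Iu n K →ₗ[K] Matrix (Fin n) (Fin n) (TruncPoly n K) :=
  Finsupp.linearCombination K (basisMatrix n K)

noncomputable def matrixCoord (s : IuIdx n) : Matrix (Fin n) (Fin n) (TruncPoly n K) →ₗ[K] K :=
  (basisScale n K s)⁻¹ •
    (truncCoeff n K (basisDeg n s) ∘ₗ entryLinearMap K _ (basisPos n s).1 (basisPos n s).2)

variable {n K}

theorem basisDeg_le (s : IuIdx n) : basisDeg n s ≤ n := by
  rcases s with ⟨⟨i, j⟩, _⟩ | i | i
  exacts [(lam_lt i j).le, Nat.zero_le _, le_rfl]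

theorem basisScale_ne_zero (hK : (2 : K) ≠ 0) (s : IuIdx n) : basisScale n K s ≠ 0 := by
  rcases s with _ | _ | _
  exacts [one_ne_zero, one_ne_zero, hK]

theorem eq_of_basisPos_eq_of_basisDeg_eq {s t : IuIdx n} (hpos : basisPos n s = basisPos n t)
    (hdeg : basisDeg n s = basisDeg n t) : s = t := by
  rcases s with ⟨⟨i, j⟩, hij⟩ | i | i <;> rcases t with ⟨⟨k, l⟩, hkl⟩ | k | k <;>
    simp only [basisPos, basisDeg, Prod.mk.injEq, and_self] at hpos hdeg
  · obtain ⟨rfl, rfl⟩ := hpos; rfl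
  · exact absurd (hpos.1.trans hpos.2.symm) hij
  · exact absurd (hpos.1.trans hpos.2.symm) hij
  · exact absurd (hpos.1.symm.trans hpos.2) hkl
  · rw [hpos]
  · exact absurd hdeg i.pos.ne
  · exact absurd (hpos.1.symm.trans hpos.2) hkl
  · exact absurd hdeg i.pos.ne'
  · rw [hpos]

theorem matrixCoord_basisMatrix (hK : (2 : K) ≠ 0) (s t : IuIdx n) :
    matrixCoord n K s (basisMatrix n K t) = if s = t then 1 else 0 := by
  rw [matrixCoord, basisMatrix, LinearMap.smul_apply, LinearMap.comp_apply,
    entryLinearMap_apply, single_apply]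
  by_cases hpos : basisPos n t = basisPos n s
  · rw [if_pos (Prod.ext_iff.mp hpos), _root_.map_smul,
      truncCoeff_truncT_pow _ (basisDeg_le t)]
    by_cases hdeg : basisDeg n s = basisDeg n t
    · obtain rfl := eq_of_basisPos_eq_of_basisDeg_eq hpos.symm hdeg
      simp [basisScale_ne_zero hK]
    · rw [if_neg hdeg, if_neg (fun h : s = t => hdeg (h ▸ rfl)), smul_zero, smul_zero]
  · rw [if_neg (fun h => hpos (Prod.ext h.1 h.2)), map_zero, smul_zero,
      if_neg (fun h : s = t => hpos (h ▸ rfl))]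

theorem matrixCoord_embed (hK : (2 : K) ≠ 0) (s : IuIdx n) (u : Iu n K) :
    matrixCoord n K s (embed n K u) = u s := by
  suffices matrixCoord n K s ∘ₗ embed n K = Finsupp.lapply s from LinearMap.congr_fun this u
  refine Finsupp.lhom_ext fun t c => ?_
  simp [embed, matrixCoord_basisMatrix hK, Finsupp.single_apply, eq_comm]

theorem embed_injective (hK : (2 : K) ≠ 0) : Function.Injective (embed n K) := fun u v h =>
  Finsupp.ext fun s => by rw [← matrixCoord_embed hK, h, matrixCoord_embed hK]

end Embedding

section MatrixSingle

variable {ι α : Type*} [Fintype ι] [DecidableEq ι]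

theorem single_mul_single_eq_ite [NonUnitalNonAssocSemiring α] (i j k l : ι) (a b : α) :
    single i j a * single k l b = if j = k then single i l (a * b) else 0 := by
  split_ifs with h
  · rw [h, single_mul_single_same]
  · exact single_mul_single_of_ne (c := a) i j k h b

theorem lie_single_single [Ring α] (i j k l : ι) (a b : α) :
    ⁅single i j a, single k l b⁆ =
      (if j = k then single i l (a * b) else 0) - (if l = i then single k j (b * a) else 0) := by
  rw [Ring.lie_def, single_mul_single_eq_ite, single_mul_single_eq_ite]

theorem lie_single_single_eq_zero [Ring α] (i j k l : ι) {a b : α} (hab : a * b = 0)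
    (hba : b * a = 0) : ⁅single i j a, single k l b⁆ = 0 := by
  simp [lie_single_single, hab, hba]

theorem lie_single_diag_single_diag [CommRing α] (i k : ι) (a b : α) :
    ⁅single i i a, single k k b⁆ = 0 := by
  rw [lie_single_single]
  by_cases h : i = k
  · subst h; simp [mul_comm]
  · simp [h, Ne.symm h]

end MatrixSingle

section Bracket

variable {n K}

@[simp]
theorem basisMatrix_inl (i j : Fin n) (h : i ≠ j) :
    basisMatrix n K (Sum.inl ⟨(i, j), h⟩) = single i j (truncT n K ^ lam n i j) :=
  congrArg (single i j) (one_smul K _)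

@[simp]
theorem basisMatrix_inr_inl (i : Fin n) :
    basisMatrix n K (Sum.inr (Sum.inl i)) = single i i 1 := by
  simp [basisMatrix, basisPos, basisDeg, basisScale]

@[simp]
theorem basisMatrix_inr_inr (i : Fin n) :
    basisMatrix n K (Sum.inr (Sum.inr i)) = single i i ((2 : K) • truncT n K ^ n) := rfl

theorem embed_single (s : IuIdx n) (c : K) :
    embed n K (Finsupp.single s c) = c • basisMatrix n K s :=
  Finsupp.linearCombination_single K c s

theorem embed_xe {i j : Fin n} (h : i ≠ j) :
    embed n K (xe n K i j) = single i j (truncT n K ^ lam n i j) := by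
  rw [xe, dif_pos h, xE, embed_single, one_smul, basisMatrix_inl]

theorem embed_bE (i : Fin n) : embed n K (bE n K i) = single i i ((2 : K) • truncT n K ^ n) := by
  rw [bE, embed_single, one_smul, basisMatrix_inr_inr]

theorem lie_basisMatrix_eq_zero_of_lt {s t : IuIdx n} (h : n < basisDeg n s + basisDeg n t) :
    ⁅basisMatrix n K s, basisMatrix n K t⁆ = 0 := by
  refine lie_single_single_eq_zero _ _ _ _ ?_ ?_ <;>
    rw [smul_mul_smul_comm, ← pow_add, truncT_pow_eq_zero (by omega), smul_zero]

theorem lie_basisMatrix_inr_inr (s t : Fin n ⊕ Fin n) :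
    ⁅basisMatrix n K (Sum.inr s), basisMatrix n K (Sum.inr t)⁆ = 0 := by
  rcases s with i | i <;> rcases t with k | k <;> exact lie_single_diag_single_diag _ _ _ _

theorem embed_bb_inl_inl (hK : (2 : K) ≠ 0) (i j k l : Fin n) (hij : i ≠ j) (hkl : k ≠ l) :
    embed n K (bb n K (Sum.inl ⟨(i, j), hij⟩) (Sum.inl ⟨(k, l), hkl⟩)) =
      ⁅basisMatrix n K (Sum.inl ⟨(i, j), hij⟩), basisMatrix n K (Sum.inl ⟨(k, l), hkl⟩)⁆ := by
  rw [bb, basisMatrix_inl, basisMatrix_inl, lie_single_single]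
  by_cases hswap : k = j ∧ l = i
  · obtain ⟨rfl, rfl⟩ := hswap
    rw [if_pos ⟨rfl, rfl⟩, if_pos rfl, if_pos rfl, ← pow_add, ← pow_add, lam_add_lam_swap hij,
      lam_add_lam_swap hkl, _root_.map_smul, map_sub, embed_bE, embed_bE, smul_sub,
      smul_single, smul_single, smul_smul, inv_mul_cancel₀ hK, one_smul]
  rw [if_neg hswap]
  by_cases hjk : j = k
  · subst hjk
    have hil : i ≠ l := fun h => hswap ⟨rfl, h.symm⟩
    rw [if_pos rfl, if_pos rfl, if_neg (Ne.symm hil), if_neg (Ne.symm hil),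
      truncT_pow_lam_mul j hil]
    split_ifs <;> simp [embed_xe hil]
  by_cases hli : l = i
  · subst hli
    have hkj : k ≠ j := fun h => hswap ⟨h, rfl⟩
    rw [if_neg hjk, if_neg hjk, if_pos rfl, if_pos rfl, truncT_pow_lam_mul l hkj,
      add_comm (lam n l j)]
    split_ifs <;> simp [embed_xe hkj]
  · simp [hjk, hli]

theorem embed_bb_inr_inl (i j k : Fin n) (hjk : j ≠ k) :
    embed n K (bb n K (Sum.inr (Sum.inl i)) (Sum.inl ⟨(j, k), hjk⟩)) =
      ⁅basisMatrix n K (Sum.inr (Sum.inl i)), basisMatrix n K (Sum.inl ⟨(j, k), hjk⟩)⁆ := by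
  rw [bb, _root_.map_smul, embed_xe hjk, basisMatrix_inr_inl, basisMatrix_inl, lie_single_single]
  by_cases hij : i = j <;> by_cases hik : i = k <;> simp_all [eq_comm]

theorem embed_bb (hK : (2 : K) ≠ 0) :
    ∀ s t : IuIdx n, embed n K (bb n K s t) = ⁅basisMatrix n K s, basisMatrix n K t⁆
  | Sum.inl ⟨(i, j), hij⟩, Sum.inl ⟨(k, l), hkl⟩ => embed_bb_inl_inl hK i j k l hij hkl
  | Sum.inr (Sum.inl i), Sum.inl ⟨(j, k), hjk⟩ => embed_bb_inr_inl i j k hjk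
  | Sum.inl ⟨(j, k), hjk⟩, Sum.inr (Sum.inl i) => by
    rw [show bb n K _ _ = -bb n K (Sum.inr (Sum.inl i)) (Sum.inl ⟨(j, k), hjk⟩) from rfl,
      map_neg, embed_bb_inr_inl, ← lie_skew, neg_neg]
  | Sum.inl ⟨(i, j), hij⟩, Sum.inr (Sum.inr k) => (map_zero (embed n K)).trans
    (lie_basisMatrix_eq_zero_of_lt (Nat.lt_add_of_pos_left (lam_pos hij))).symm
  | Sum.inr (Sum.inr k), Sum.inl ⟨(i, j), hij⟩ => (map_zero (embed n K)).trans
    (lie_basisMatrix_eq_zero_of_lt (Nat.lt_add_of_pos_right (lam_pos hij))).symm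
  | Sum.inr s, Sum.inr t => by
    rcases s with i | i <;> rcases t with k | k <;>
      exact (map_zero (embed n K)).trans (lie_basisMatrix_inr_inr _ _).symm

theorem embed_br (hK : (2 : K) ≠ 0) (u v : Iu n K) :
    embed n K (br n K u v) = ⁅embed n K u, embed n K v⁆ := by
  induction u using Finsupp.induction_linear with
  | zero => simp
  | add u u' hu hu' => simp only [map_add, LinearMap.add_apply, hu, hu', add_lie]
  | single s c =>
    induction v using Finsupp.induction_linear with
    | zero => simp
    | add v v' hv hv' => simp only [map_add, hv, hv', lie_add]
    | single t d =>
      simp [br, embed_single, embed_bb hK, Ring.lie_def, smul_sub, smul_smul, mul_comm]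

end Bracket

noncomputable abbrev Iu.lieRing (hK : (2 : K) ≠ 0) : LieRing (Iu n K) :=
  (embed_injective hK).lieRing (f := (embed n K).toAddMonoidHom) (fun u v => br n K u v)
    (embed_br hK)

end LieAlgebraStructure

theorem stmt0 (n : ℕ) (K : Type*) [Field K] (hK : (2 : K) ≠ 0) :
    (∀ u : Iu n K, br n K u u = 0) ∧
    (∀ u v w : Iu n K,
      br n K (br n K u v) w + br n K (br n K v w) u + br n K (br n K w u) v = 0) ∧
    ∃ inst : LieRing (Iu n K),
      inst.toAddCommGroup = (inferInstance : AddCommGroup (Iu n K)) ∧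
      ∀ u v : Iu n K, @Bracket.bracket _ _ inst.toBracket u v = br n K u v := by
  let inst := Iu.lieRing n K hK
  exact ⟨lie_self, lie_lie_add_lie_lie_add_lie_lie, inst, rfl, fun _ _ => rfl⟩
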